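/- In the polynomial ring ℚ[a,b,α,β,z_1,x_1,y_1,z_2,x_2,y_2] define t_0 = z_1·z_2, t_1 = x_1·x_2, t_2 = z_1^2·x_2 + x_1·z_2^2, t_3 = y_1·y_2, and set s_1 = α·t_2 + β·t_1, s_2 = (2·b·α·β − a·β^2)·t_0^2 + b·α^2·t_1 + (a·α^2 + β^2)·t_2, s_3 = (b^2·α^3 + b·β^3)·t_0^3 + (a·b·α^3 + 3·b·α·β^2 − a·β^3)·t_0·t_1 + (a^2·α^3 + 3·b·α^2·β)·t_0·t_2 + (−b·α^3 + a·α^2·β + β^3)·t_3, l_1 = (b·α − a·β)·t_0^4 + β·t_0^2·t_2 − β·t_1^2 − α·t_1·t_2 − α·t_0·t_3, l_2 = b·β·t_0^4 + a·α·t_0^2·t_2 + b·α·t_0^2·t_1 − α·t_2^2 − β·t_1·t_2 + β·t_0·t_3. Then the exact polynomial identity s_1·s_2 + b·α^2·l_1 + (a·α^2 + β^2)·l_2 = t_0·s_3 holds. -/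
import Mathlib


namespace Stmt5

noncomputable section

open MvPolynomial

/-- The ring `ℚ[a,b,α,β,z₁,x₁,y₁,z₂,x₂,y₂]`. -/
abbrev R : Type := MvPolynomial (Fin 10) ℚ

def a : R := X 0
def b : R := X 1
def α : R := X 2
def β : R := X 3
def z₁ : R := X 4
def x₁ : R := X 5
def y₁ : R := X 6
def z₂ : R := X 7
def x₂ : R := X 8
def y₂ : R := X 9

def t₀ : R := z₁ * z₂
def t₁ : R := x₁ * x₂
def t₂ : R := z₁ ^ 2 * x₂ + x₁ * z₂ ^ 2
def t₃ : R := y₁ * y₂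

def s₁ : R := α * t₂ + β * t₁
def s₂ : R := (2 * b * α * β - a * β ^ 2) * t₀ ^ 2 + b * α ^ 2 * t₁ + (a * α ^ 2 + β ^ 2) * t₂
def s₃ : R := (b ^ 2 * α ^ 3 + b * β ^ 3) * t₀ ^ 3
  + (a * b * α ^ 3 + 3 * b * α * β ^ 2 - a * β ^ 3) * t₀ * t₁
  + (a ^ 2 * α ^ 3 + 3 * b * α ^ 2 * β) * t₀ * t₂
  + (-(b * α ^ 3) + a * α ^ 2 * β + β ^ 3) * t₃

def l₁ : R := (b * α - a * β) * t₀ ^ 4 + β * t₀ ^ 2 * t₂ - β * t₁ ^ 2 - α * t₁ * t₂ - α * t₀ * t₃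
def l₂ : R := b * β * t₀ ^ 4 + a * α * t₀ ^ 2 * t₂ + b * α * t₀ ^ 2 * t₁ - α * t₂ ^ 2
  - β * t₁ * t₂ + β * t₀ * t₃

/-- The identity `s₁·s₂ + b·α²·l₁ + (a·α² + β²)·l₂ = t₀·s₃` determining the
degree-3 generator `s₃` of the canonical ring. -/
theorem s_three_identity :
    s₁ * s₂ + b * α ^ 2 * l₁ + (a * α ^ 2 + β ^ 2) * l₂ = t₀ * s₃ := by
  simp only [s₁, s₂, s₃, l₁, l₂, t₀, t₁, t₂, t₃]; ring

end

end Stmt5
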